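/- arXiv:1909.13103 — 3 statements merged into one kernel-verified Lean document; each statement's English description precedes it below -/
import Mathlib

section
/- For the fully implicit first stage of the semi-discrete scheme, defined weakly by (u¹,v) − Δt·a₁₁·(ā/ε)(ρ¹, ∇·v) = (uⁿ,v) for all v ∈ H(div;T^d), and −Δt·a₁₁·(ā/ε)(∇·u¹, λ) − (ρ¹,λ) = −(ρⁿ,λ) for all λ ∈ L²(T^d), any solution (u¹,ρ¹) satisfies the energy estimate E¹ ≤ Eⁿ, where E := ½(‖u‖²_{L²} + ‖ρ‖²_{L²}). -/
open MeasureTheory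

noncomputable section

abbrev Pt (d : ℕ) := EuclideanSpace ℝ (Fin d)

def Per {d : ℕ} {α : Type*} (f : Pt d → α) : Prop :=
  ∀ (x : Pt d) (i : Fin d), f (x + EuclideanSpace.single i 1) = f x

def Box (d : ℕ) : Set (Pt d) := {x | ∀ i, x i ∈ Set.Icc (0 : ℝ) 1}

def dvg {d : ℕ} (u : Pt d → Pt d) (x : Pt d) : ℝ :=
  ∑ i, fderiv ℝ u x (EuclideanSpace.single i 1) i

def Smoo {d : ℕ} {F : Type*} [NormedAddCommGroup F] [NormedSpace ℝ F]
    (f : Pt d → F) : Prop := ContDiff ℝ (⊤ : ℕ∞) f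

/-!
Test the first equation with `v = u¹` and the second with `λ = ρ¹`. The coupling terms
`Δt a₁₁ (ā/ε) (ρ¹, ∇·u¹)` then cancel on subtraction, leaving
`‖u¹‖² + ‖ρ¹‖² = (uⁿ, u¹) + (ρⁿ, ρ¹)`, and Young's inequality `(a, b) ≤ ½‖a‖² + ½‖b‖²`
bounds the right-hand side by `½(‖uⁿ‖² + ‖ρⁿ‖²) + ½(‖u¹‖² + ‖ρ¹‖²)`.
-/

open scoped RealInnerProductSpace

theorem isCompact_box (d : ℕ) : IsCompact (Box d) := by
  have : Box d = EuclideanSpace.equiv (Fin d) ℝ ⁻¹' Set.univ.pi fun _ => Set.Icc 0 1 := by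
    ext x; simp [Box, Pi.le_def, forall_and]
  rw [this]
  exact (EuclideanSpace.equiv (Fin d) ℝ).toHomeomorph.isCompact_preimage.mpr
    (isCompact_univ_pi fun _ => isCompact_Icc)

section Young

variable {α E : Type*} [MeasurableSpace α] {μ : Measure α}
  [NormedAddCommGroup E] [InnerProductSpace ℝ E]

theorem integral_inner_le_half_add {f g : α → E}
    (hf : Integrable (fun x => ‖f x‖ ^ 2) μ) (hg : Integrable (fun x => ‖g x‖ ^ 2) μ)
    (hfg : Integrable (fun x => ⟪f x, g x⟫) μ) :
    ∫ x, ⟪f x, g x⟫ ∂μ ≤ (∫ x, ‖f x‖ ^ 2 ∂μ) / 2 + (∫ x, ‖g x‖ ^ 2 ∂μ) / 2 := by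
  rw [← integral_div, ← integral_div, ← integral_add (hf.div_const 2) (hg.div_const 2)]
  refine integral_mono hfg ((hf.div_const 2).add (hg.div_const 2)) fun x => ?_
  have := two_mul_le_add_sq ‖f x‖ ‖g x‖
  linarith [real_inner_le_norm (f x) (g x)]

theorem integral_mul_le_half_add {f g : α → ℝ}
    (hf : Integrable (fun x => f x ^ 2) μ) (hg : Integrable (fun x => g x ^ 2) μ)
    (hfg : Integrable (fun x => f x * g x) μ) :
    ∫ x, f x * g x ∂μ ≤ (∫ x, f x ^ 2 ∂μ) / 2 + (∫ x, g x ^ 2 ∂μ) / 2 := by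
  simpa only [Real.inner_apply, Real.norm_eq_abs, sq_abs] using
    integral_inner_le_half_add (f := f) (g := g) (by simpa using hf) (by simpa using hg)
      (by simpa only [Real.inner_apply] using hfg)

end Young

theorem Continuous.integrableOn_box {d : ℕ} {F : Type*} [NormedAddCommGroup F] {f : Pt d → F}
    (hf : Continuous f) : IntegrableOn f (Box d) :=
  hf.continuousOn.integrableOn_compact (isCompact_box d)

theorem implicit_first_stage_energy_estimate_general (d : ℕ)
    (Δt a11 ab ε : ℝ)
    (ρn ρ1 : Pt d → ℝ) (un u1 : Pt d → Pt d)
    (hρn : Smoo ρn) (hρ1 : Smoo ρ1) (hun : Smoo un) (hu1 : Smoo u1)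
    (hpρ1 : Per ρ1) (hpu1 : Per u1)
    (hweak₁ : ∀ v : Pt d → Pt d, Smoo v → Per v →
      (∫ x in Box d, (inner ℝ (u1 x) (v x) : ℝ)) -
        Δt * a11 * (ab / ε) * (∫ x in Box d, ρ1 x * dvg v x) =
      ∫ x in Box d, (inner ℝ (un x) (v x) : ℝ))
    (hweak₂ : ∀ l : Pt d → ℝ, Smoo l → Per l →
      -(Δt * a11 * (ab / ε) * (∫ x in Box d, dvg u1 x * l x)) -
        (∫ x in Box d, ρ1 x * l x) =
      -(∫ x in Box d, ρn x * l x)) :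
    (1 / 2) * ((∫ x in Box d, ‖u1 x‖ ^ 2) + ∫ x in Box d, (ρ1 x) ^ 2) ≤
    (1 / 2) * ((∫ x in Box d, ‖un x‖ ^ 2) + ∫ x in Box d, (ρn x) ^ 2) := by
  have cρn := hρn.continuous
  have cρ1 := hρ1.continuous
  have cun := hun.continuous
  have cu1 := hu1.continuous
  have hu := integral_inner_le_half_add (μ := volume.restrict (Box d)) (f := un) (g := u1)
    (Continuous.integrableOn_box (by fun_prop)) (Continuous.integrableOn_box (by fun_prop))
    (Continuous.integrableOn_box (by fun_prop))
  have hρ := integral_mul_le_half_add (μ := volume.restrict (Box d)) (f := ρn) (g := ρ1)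
    (Continuous.integrableOn_box (by fun_prop)) (Continuous.integrableOn_box (by fun_prop))
    (Continuous.integrableOn_box (by fun_prop))
  have h₁ := hweak₁ u1 hu1 hpu1
  have h₂ := hweak₂ ρ1 hρ1 hpρ1
  simp only [real_inner_self_eq_norm_sq, mul_comm (ρ1 _) (dvg u1 _), ← sq] at h₁ h₂
  linarith

/-- Energy estimate for the fully implicit first stage of the semi-discrete
scheme: any weak solution `(u¹,ρ¹)` of
`(u¹,v) − Δt a₁₁ (ā/ε)(ρ¹,∇·v) = (uⁿ,v)` and
`−Δt a₁₁ (ā/ε)(∇·u¹,λ) − (ρ¹,λ) = −(ρⁿ,λ)` satisfies `E¹ ≤ Eⁿ`,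
where `E = ½(‖u‖² + ‖ρ‖²)`. -/
theorem implicit_first_stage_energy_estimate (d : ℕ)
    (Δt a11 ab ε : ℝ) (hΔt : 0 < Δt) (hab : 0 < ab) (hε : 0 < ε)
    (ρn ρ1 : Pt d → ℝ) (un u1 : Pt d → Pt d)
    (hρn : Smoo ρn) (hρ1 : Smoo ρ1) (hun : Smoo un) (hu1 : Smoo u1)
    (hpρn : Per ρn) (hpρ1 : Per ρ1) (hpun : Per un) (hpu1 : Per u1)
    (hweak₁ : ∀ v : Pt d → Pt d, Smoo v → Per v →
      (∫ x in Box d, (inner ℝ (u1 x) (v x) : ℝ)) -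
        Δt * a11 * (ab / ε) * (∫ x in Box d, ρ1 x * dvg v x) =
      ∫ x in Box d, (inner ℝ (un x) (v x) : ℝ))
    (hweak₂ : ∀ l : Pt d → ℝ, Smoo l → Per l →
      -(Δt * a11 * (ab / ε) * (∫ x in Box d, dvg u1 x * l x)) -
        (∫ x in Box d, ρ1 x * l x) =
      -(∫ x in Box d, ρn x * l x)) :
    (1 / 2) * ((∫ x in Box d, ‖u1 x‖ ^ 2) + ∫ x in Box d, (ρ1 x) ^ 2) ≤
    (1 / 2) * ((∫ x in Box d, ‖un x‖ ^ 2) + ∫ x in Box d, (ρn x) ^ 2) :=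
  implicit_first_stage_energy_estimate_general d Δt a11 ab ε ρn ρ1 un u1 hρn hρ1 hun hu1 hpρ1 hpu1
    hweak₁ hweak₂
end
end

section
/- Consider the one-dimensional fully-discrete implicit stage ρᵢ¹ = ρᵢⁿ − β(u¹_{i+1} − u¹_{i−1}), uᵢ¹ = uᵢⁿ − β(ρ¹_{i+1} − ρ¹_{i−1}) with periodic indices i ∈ ℤ/Nℤ and β = (Δt/(2Δx))(ā/ε)a₁₁ ∈ ℝ. This linear system has a unique solution (ρ¹, u¹) ∈ ℝ^N × ℝ^N for every right-hand side (ρⁿ, uⁿ), and the solution satisfies ‖ρ¹‖²_{ℓ²} + ‖u¹‖²_{ℓ²} ≤ ‖ρⁿ‖²_{ℓ²} + ‖uⁿ‖²_{ℓ²}. -/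
noncomputable section

/-- First-row data of the periodic central-difference circulant matrix
`P = circ(0, 1, 0, …, 0, −1)`: entries `P_{i,i+1} = 1`, `P_{i,i−1} = −1`. -/
def Pv (N : ℕ) [NeZero N] : ZMod N → ℝ :=
  fun k => if k = -1 then 1 else if k = 1 then -1 else 0

/-- The `N×N` circulant matrix `P = circ(0, 1, 0, …, 0, −1)`. -/
def Pmat (N : ℕ) [NeZero N] : Matrix (ZMod N) (ZMod N) ℝ :=
  Matrix.circulant (Pv N)

private lemma shift_sum (N : ℕ) [NeZero N] (a b : ZMod N → ℝ) :
    ∑ i, a i * b (i + 1) = ∑ i, a (i - 1) * b i := by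
  exact Fintype.sum_equiv (Equiv.addRight (1 : ZMod N)) _ _ (fun i => by simp)

private lemma skew_sum (N : ℕ) [NeZero N] (v w : ZMod N → ℝ) :
    ∑ i, v i * (w (i + 1) - w (i - 1)) + ∑ i, w i * (v (i + 1) - v (i - 1)) = 0 := by
  have e1 : ∀ (v w : ZMod N → ℝ),
      ∑ i, v i * (w (i + 1) - w (i - 1))
        = ∑ i, v i * w (i + 1) - ∑ i, v i * w (i - 1) := by
    intro v w
    rw [← Finset.sum_sub_distrib]
    exact Finset.sum_congr rfl (fun i _ => by ring)
  rw [e1 v w, e1 w v]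
  have h1 : ∑ i, v i * w (i + 1) = ∑ i, w i * v (i - 1) := by
    rw [shift_sum]; exact Finset.sum_congr rfl (fun i _ => by ring)
  have h2 : ∑ i, w i * v (i + 1) = ∑ i, v i * w (i - 1) := by
    rw [shift_sum]; exact Finset.sum_congr rfl (fun i _ => by ring)
  rw [h1, h2]; ring

private lemma stab (N : ℕ) [NeZero N] (β : ℝ) (ρn un ρ u : ZMod N → ℝ)
    (h1 : ∀ i, ρ i = ρn i - β * (u (i + 1) - u (i - 1)))
    (h2 : ∀ i, u i = un i - β * (ρ (i + 1) - ρ (i - 1))) :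
    (∑ i, (ρ i) ^ 2) + ∑ i, (u i) ^ 2 ≤ (∑ i, (ρn i) ^ 2) + ∑ i, (un i) ^ 2 := by
  have e1 : ∑ i, (ρ i) ^ 2
      = ∑ i, ρ i * ρn i - β * ∑ i, ρ i * (u (i + 1) - u (i - 1)) := by
    rw [Finset.mul_sum, ← Finset.sum_sub_distrib]
    refine Finset.sum_congr rfl (fun i _ => ?_)
    rw [h1 i]; ring
  have e2 : ∑ i, (u i) ^ 2
      = ∑ i, u i * un i - β * ∑ i, u i * (ρ (i + 1) - ρ (i - 1)) := by
    rw [Finset.mul_sum, ← Finset.sum_sub_distrib]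
    refine Finset.sum_congr rfl (fun i _ => ?_)
    rw [h2 i]; ring
  have hskew := skew_sum N ρ u
  have key : (∑ i, (ρ i) ^ 2) + ∑ i, (u i) ^ 2
      = ∑ i, ρ i * ρn i + ∑ i, u i * un i := by
    rw [e1, e2]; linear_combination (-β) * hskew
  have cs1 : ∑ i, ρ i * ρn i ≤ ∑ i, ((ρ i) ^ 2 + (ρn i) ^ 2) / 2 :=
    Finset.sum_le_sum (fun i _ => by nlinarith [sq_nonneg (ρ i - ρn i)])
  have cs2 : ∑ i, u i * un i ≤ ∑ i, ((u i) ^ 2 + (un i) ^ 2) / 2 :=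
    Finset.sum_le_sum (fun i _ => by nlinarith [sq_nonneg (u i - un i)])
  have s1 : ∑ i, ((ρ i) ^ 2 + (ρn i) ^ 2) / 2
      = ((∑ i, (ρ i) ^ 2) + ∑ i, (ρn i) ^ 2) / 2 := by
    rw [← Finset.sum_div, Finset.sum_add_distrib]
  have s2 : ∑ i, ((u i) ^ 2 + (un i) ^ 2) / 2
      = ((∑ i, (u i) ^ 2) + ∑ i, (un i) ^ 2) / 2 := by
    rw [← Finset.sum_div, Finset.sum_add_distrib]
  rw [s1] at cs1; rw [s2] at cs2
  linarith

/-- The system operator `(ρ, u) ↦ (ρ + βPu, u + βPρ)` as a linear map. -/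
private def Lop (N : ℕ) [NeZero N] (β : ℝ) :
    ((ZMod N → ℝ) × (ZMod N → ℝ)) →ₗ[ℝ] ((ZMod N → ℝ) × (ZMod N → ℝ)) where
  toFun p := (fun i => p.1 i + β * (p.2 (i + 1) - p.2 (i - 1)),
              fun i => p.2 i + β * (p.1 (i + 1) - p.1 (i - 1)))
  map_add' p q := by
    refine Prod.ext ?_ ?_ <;> funext i <;>
      simp [Prod.fst_add, Prod.snd_add, Pi.add_apply] <;> ring
  map_smul' c p := by
    refine Prod.ext ?_ ?_ <;> funext i <;>
      simp [Prod.smul_fst, Prod.smul_snd, Pi.smul_apply, smul_eq_mul] <;> ring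

private lemma Lop_inj (N : ℕ) [NeZero N] (β : ℝ) :
    Function.Injective (Lop N β) := by
  rw [← LinearMap.ker_eq_bot, LinearMap.ker_eq_bot']
  intro p hp
  have h1 : ∀ i, p.1 i + β * (p.2 (i + 1) - p.2 (i - 1)) = 0 := fun i =>
    congrFun (congrArg Prod.fst hp) i
  have h2 : ∀ i, p.2 i + β * (p.1 (i + 1) - p.1 (i - 1)) = 0 := fun i =>
    congrFun (congrArg Prod.snd hp) i
  have hb := stab N β (fun _ => 0) (fun _ => 0) p.1 p.2
    (fun i => by show p.1 i = 0 - β * (p.2 (i + 1) - p.2 (i - 1)); linarith [h1 i])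
    (fun i => by show p.2 i = 0 - β * (p.1 (i + 1) - p.1 (i - 1)); linarith [h2 i])
  simp only [ne_eq, OfNat.ofNat_ne_zero, not_false_eq_true, zero_pow,
    Finset.sum_const_zero, add_zero] at hb
  have hnn1 : (0:ℝ) ≤ ∑ i, (p.1 i) ^ 2 := Finset.sum_nonneg (fun i _ => sq_nonneg _)
  have hnn2 : (0:ℝ) ≤ ∑ i, (p.2 i) ^ 2 := Finset.sum_nonneg (fun i _ => sq_nonneg _)
  have hz1 : ∑ i, (p.1 i) ^ 2 = 0 := le_antisymm (by linarith) hnn1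
  have hz2 : ∑ i, (p.2 i) ^ 2 = 0 := le_antisymm (by linarith) hnn2
  refine Prod.ext ?_ ?_ <;> funext i
  · have := (Finset.sum_eq_zero_iff_of_nonneg (fun i _ => sq_nonneg (p.1 i))).mp hz1 i
      (Finset.mem_univ i)
    exact pow_eq_zero_iff (n := 2) (by norm_num) |>.mp this
  · have := (Finset.sum_eq_zero_iff_of_nonneg (fun i _ => sq_nonneg (p.2 i))).mp hz2 i
      (Finset.mem_univ i)
    exact pow_eq_zero_iff (n := 2) (by norm_num) |>.mp this

/-- The one-dimensional fully-discrete implicit stage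
`ρᵢ¹ = ρᵢⁿ − β(u¹_{i+1} − u¹_{i−1})`, `uᵢ¹ = uᵢⁿ − β(ρ¹_{i+1} − ρ¹_{i−1})`
(periodic indices) has a unique solution for every right-hand side, and every
solution satisfies `‖ρ¹‖²_{ℓ²} + ‖u¹‖²_{ℓ²} ≤ ‖ρⁿ‖²_{ℓ²} + ‖uⁿ‖²_{ℓ²}`,
uniformly in `β` (hence uniformly in `ε`). -/
theorem implicit_stage_unique_stable (N : ℕ) [NeZero N] (hN : 3 ≤ N) (β : ℝ)
    (ρn un : ZMod N → ℝ) :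
    (∃! p : (ZMod N → ℝ) × (ZMod N → ℝ),
      (∀ i, p.1 i = ρn i - β * (p.2 (i + 1) - p.2 (i - 1))) ∧
      (∀ i, p.2 i = un i - β * (p.1 (i + 1) - p.1 (i - 1)))) ∧
    (∀ p : (ZMod N → ℝ) × (ZMod N → ℝ),
      (∀ i, p.1 i = ρn i - β * (p.2 (i + 1) - p.2 (i - 1))) →
      (∀ i, p.2 i = un i - β * (p.1 (i + 1) - p.1 (i - 1))) →
      (∑ i, (p.1 i) ^ 2) + ∑ i, (p.2 i) ^ 2 ≤ (∑ i, (ρn i) ^ 2) + ∑ i, (un i) ^ 2) := by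
  have hinj := Lop_inj N β
  have hsurj : Function.Surjective (Lop N β) :=
    (LinearMap.injective_iff_surjective).mp hinj
  have hiff : ∀ p : (ZMod N → ℝ) × (ZMod N → ℝ),
      ((∀ i, p.1 i = ρn i - β * (p.2 (i + 1) - p.2 (i - 1))) ∧
       (∀ i, p.2 i = un i - β * (p.1 (i + 1) - p.1 (i - 1)))) ↔
      Lop N β p = (ρn, un) := by
    intro p
    constructor
    · rintro ⟨h1, h2⟩
      refine Prod.ext ?_ ?_ <;> funext i
      · show p.1 i + β * (p.2 (i + 1) - p.2 (i - 1)) = ρn i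
        rw [h1 i]; ring
      · show p.2 i + β * (p.1 (i + 1) - p.1 (i - 1)) = un i
        rw [h2 i]; ring
    · intro h
      constructor
      · intro i
        have := congrFun (congrArg Prod.fst h) i
        simp only [Lop, LinearMap.coe_mk, AddHom.coe_mk] at this
        linarith [this]
      · intro i
        have := congrFun (congrArg Prod.snd h) i
        simp only [Lop, LinearMap.coe_mk, AddHom.coe_mk] at this
        linarith [this]
  constructor
  · obtain ⟨p, hp⟩ := hsurj (ρn, un)
    refine ⟨p, (hiff p).mpr hp, ?_⟩
    intro q hq
    exact hinj (((hiff q).mp hq).trans hp.symm)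
  · intro p h1 h2
    exact stab N β ρn un p.1 p.2 h1 h2
end
end

section
/- If the discrete data (ρⁿᵢ, uⁿᵢ) satisfies ρⁿᵢ = const and the discrete divergence (uⁿ_{i+1} − uⁿ_{i−1})/(2Δx) = 0 for all i (periodic indices), then the solution (ρ¹ᵢ, u¹ᵢ) of the implicit stage ρ¹ᵢ = ρⁿᵢ − β(u¹_{i+1} − u¹_{i−1}), u¹ᵢ = uⁿᵢ − β(ρ¹_{i+1} − ρ¹_{i−1}) also satisfies ρ¹ᵢ = const (equal to the same constant) and (u¹_{i+1} − u¹_{i−1})/(2Δx) = 0 for all i; i.e., the scheme leaves the discrete well-prepared space invariant. -/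
noncomputable section

/-- Discrete `E`-invariance of the implicit stage: if `ρⁿ` is constant and the
discrete divergence `(uⁿ_{i+1} − uⁿ_{i−1})/(2Δx)` vanishes, then the stage
solution satisfies `ρ¹ᵢ = const` (the same constant) and
`(u¹_{i+1} − u¹_{i−1})/(2Δx) = 0` for all `i`. -/
theorem implicit_stage_E_invariant (N : ℕ) [NeZero N] (hN : 3 ≤ N) (β Δx c : ℝ)
    (hΔx : 0 < Δx)
    (ρn un ρ1 u1 : ZMod N → ℝ)
    (hρn : ∀ i, ρn i = c)
    (hun : ∀ i, (un (i + 1) - un (i - 1)) / (2 * Δx) = 0)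
    (hstage₁ : ∀ i, ρ1 i = ρn i - β * (u1 (i + 1) - u1 (i - 1)))
    (hstage₂ : ∀ i, u1 i = un i - β * (ρ1 (i + 1) - ρ1 (i - 1))) :
    (∀ i, ρ1 i = c) ∧ (∀ i, (u1 (i + 1) - u1 (i - 1)) / (2 * Δx) = 0) := by
  have h2 : (2 * Δx) ≠ 0 := by positivity
  have hun' : ∀ i, un (i + 1) - un (i - 1) = 0 := by
    intro i
    have := hun i
    rwa [div_eq_zero_iff, or_iff_left h2] at this
  set v : ZMod N → ℝ := fun i => ρ1 i - c with hv
  -- the central difference of u1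
  have hudiff : ∀ i, u1 (i + 1) - u1 (i - 1)
      = -β * (v (i + 2) - 2 * v i + v (i - 2)) := by
    intro i
    have h1 := hstage₂ (i + 1)
    have h2 := hstage₂ (i - 1)
    have e1 : i + 1 + 1 = i + 2 := by ring
    have e2 : i + 1 - 1 = i := by ring
    have e3 : i - 1 + 1 = i := by ring
    have e4 : i - 1 - 1 = i - 2 := by ring
    rw [e1, e2] at h1
    rw [e3, e4] at h2
    have hu := hun' i
    simp only [hv]
    rw [h1, h2]
    nlinarith [hu]
  have hkey : ∀ i, (1 + 2 * β ^ 2) * v i = β ^ 2 * (v (i + 2) + v (i - 2)) := by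
    intro i
    have h1 := hstage₁ i
    rw [hρn i, hudiff i] at h1
    simp only [hv] at h1 ⊢
    nlinarith [h1]
  have hb : (0:ℝ) ≤ β ^ 2 := sq_nonneg β
  have hvzero : ∀ i, v i = 0 := by
    obtain ⟨iM, hiM⟩ := Finite.exists_max v
    obtain ⟨im, him⟩ := Finite.exists_min v
    have hM : v iM ≤ 0 := by
      have h := hkey iM
      nlinarith [hiM (iM + 2), hiM (iM - 2)]
    have hm : 0 ≤ v im := by
      have h := hkey im
      nlinarith [him (im + 2), him (im - 2)]
    intro i
    have h1 := hiM i
    have h2 := him i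
    linarith
  have hρc : ∀ i, ρ1 i = c := by
    intro i
    have := hvzero i
    simp only [hv] at this
    linarith
  refine ⟨hρc, fun i => ?_⟩
  rw [hudiff i, hvzero, hvzero, hvzero]
  ring_nf
end
end
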